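/- arXiv:1302.1052 — 3 statements merged into one kernel-verified Lean document; each statement's English description precedes it below -/
import Mathlib

section
/- Let Q = (q₁,…,q_m) be any word in the simple reflections S, let Q' = (q₂,…,q_m, w₀q₁w₀) be its jumping word, and let σ : [m] → [m] be the cyclic shift given by σ(i) = i−1 for i ≥ 2 and σ(1) = m. Then for any subset I ⊆ [m], the subword of Q indexed by [m]∖I is a reduced word for w₀ if and only if the subword of Q' indexed by [m]∖σ(I) is a reduced word for w₀. -/
open scoped Classical

noncomputable section

namespace CP

variable {B : Type} [DecidableEq B] [Fintype B] [Nonempty B]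
variable {W : Type} [Group W]

/-- An arbitrary element of `B`, used as a junk value for `List.getD`. -/
def arb (B : Type) [Nonempty B] : B := Classical.arbitrary B

/-- The bilinear form of the standard geometric representation of a Coxeter system:
`⟨αᵢ, αⱼ⟩ = -cos (π / Mᵢⱼ)`, extended bilinearly. -/
def bil (M : CoxeterMatrix B) (u v : B → ℝ) : ℝ :=
  ∑ i, ∑ j, u i * v j * (-(Real.cos (Real.pi / (M i j))))

/-- The simple roots: the standard basis vectors of `V = ℝ^B`. -/
def sroot (i : B) : B → ℝ := Pi.single i 1

/-- The root system: the orbit of the simple roots under `W`. -/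
def rootSystem (π : Representation ℝ W (B → ℝ)) : Set (B → ℝ) :=
  {v | ∃ (w : W) (i : B), v = π w (sroot i)}

/-- The positive roots: roots with non-negative coordinates on the simple roots. -/
def posRoots (π : Representation ℝ W (B → ℝ)) : Set (B → ℝ) :=
  {v ∈ rootSystem π | ∀ i, 0 ≤ v i}

/-- The almost positive roots: positive roots plus negatives of simple roots. -/
def almostPos (π : Representation ℝ W (B → ℝ)) : Set (B → ℝ) :=
  posRoots π ∪ Set.range (fun i => -sroot i)

variable {M : CoxeterMatrix B}

/-- `l` is a reduced word for `w`. -/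
def IsRW (cs : CoxeterSystem M W) (w : W) (l : List B) : Prop :=
  cs.wordProd l = w ∧ l.length = cs.length w

/-- The letter of the infinite word `c^∞` at position `t` (`0`-indexed). -/
def cInf [Nonempty B] (cword : List B) (t : ℕ) : B := cword.getD (t % cword.length) (arb B)

/-- `f ≤ g` in the lexicographic order on sequences of positions. -/
def LexLE {N : ℕ} (f g : Fin N → ℕ) : Prop :=
  f = g ∨ ∃ k, (∀ l, l < k → f l = g l) ∧ f k < g k

/-- The subword of `Q` indexed by the complement of `I` (positions are `0`-indexed). -/
def complWord [Nonempty B] (Q : List B) (I : Finset ℕ) : List B :=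
  ((List.range Q.length).filter (· ∉ I)).map (fun k => Q.getD k (arb B))

/-- `I` is a `c`-cluster of the word `Q`: the complementary subword is a reduced word
for the longest element `w₀`. -/
def IsCluster (cs : CoxeterSystem M W) (w₀ : W) (Q : List B) (I : Finset ℕ) : Prop :=
  I ⊆ Finset.range Q.length ∧ IsRW cs w₀ (complWord Q I)

/-- The root function `r(I, j)`. -/
def rootFn (cs : CoxeterSystem M W) (π : Representation ℝ W (B → ℝ))
    (Q : List B) (I : Finset ℕ) (j : ℕ) : B → ℝ :=
  π (cs.wordProd (((List.range j).filter (· ∉ I)).map (fun x => Q.getD x (arb B))))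
    (sroot (Q.getD j (arb B)))

/-- `ρ` is a family of coefficients expanding `r(I, j)` on the root configuration
`R(I) = (r(I, i))_{i ∈ I}`. -/
def IsExpansion (cs : CoxeterSystem M W) (π : Representation ℝ W (B → ℝ))
    (Q : List B) (I : Finset ℕ) (j : ℕ) (ρ : ℕ → ℝ) : Prop :=
  rootFn cs π Q I j = ∑ i ∈ I, ρ i • rootFn cs π Q I i

/-- The rotation map `τ_c` on positions of the word `Q` (`0`-indexed): the position of the next
occurrence of the letter `q_i` if it exists, and the first occurrence of `η (q_i) = w₀ q_i w₀`
otherwise. -/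
def rot [Nonempty B] (Q : List B) (η : B → B) (i : ℕ) : ℕ :=
  if h : ∃ j, j < Q.length ∧ i < j ∧ Q.getD j (arb B) = Q.getD i (arb B) then Nat.find h
  else if h2 : ∃ j, j < Q.length ∧ Q.getD j (arb B) = η (Q.getD i (arb B)) then Nat.find h2
  else i

/-- The map `ϑ_c` from positions of the word `Q_c = cword ++ sw` to almost positive roots. -/
def theta (cs : CoxeterSystem M W) (π : Representation ℝ W (B → ℝ))
    (cword sw : List B) (i : ℕ) : B → ℝ :=
  if i < cword.length then -sroot (cword.getD i (arb B))
  else π (cs.wordProd (sw.take (i - cword.length))) (sroot (sw.getD (i - cword.length) (arb B)))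

/-- The rotation map `τ_c` on almost positive roots. -/
def rotRoot (cs : CoxeterSystem M W) (π : Representation ℝ W (B → ℝ))
    (cword : List B) (v : B → ℝ) : B → ℝ :=
  if h : ∃ k : Fin cword.length, v = -sroot (cword.get k) then
    π (cs.wordProd (cword.take (Classical.choose h).1)) (sroot (cword.get (Classical.choose h)))
  else if h2 : ∃ k : Fin cword.length,
      v = π (cs.wordProd (cword.drop ((k : ℕ) + 1)).reverse) (sroot (cword.get k)) then
    -sroot (cword.get (Classical.choose h2))
  else π (cs.wordProd cword) v

/-- One elementary commutation of two consecutive commuting letters. -/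
def CommStep (cs : CoxeterSystem M W) (u v : List B) : Prop :=
  ∃ (x y : List B) (s t : B), cs.simple s * cs.simple t = cs.simple t * cs.simple s ∧
    u = x ++ s :: t :: y ∧ v = x ++ t :: s :: y

/-- The cyclic shift on positions accompanying the jump of the first letter of a word with
`m` letters: `σ(k) = k - 1` for `k ≥ 1`, and `σ(0) = m - 1` (positions are `0`-indexed). -/
def shift (m : ℕ) (k : ℕ) : ℕ := if k = 0 then m - 1 else k - 1

end CP

/-! Under `σ`, the complement of `σ(I)` in `Q'` is the complement of `I` in `Q` with the
first letter moved to the end (when `1 ∉ I`) and replaced by `w₀q₁w₀`. Since `w₀` is an involution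
(it is the only element of its length, and `ℓ(w₀⁻¹) = ℓ(w₀)`), `q₁ P = w₀` holds iff
`P (w₀q₁w₀) = w₀`, while the lengths of the two words agree. -/

theorem mul_eq_iff_mul_conj_eq_of_inv_eq_self {G : Type*} [Group G] {w : G} (hw : w⁻¹ = w)
    (s p : G) : s * p = w ↔ p * (w * s * w) = w := by
  rw [← eq_inv_mul_iff_mul_eq, ← eq_mul_inv_iff_mul_eq, mul_inv_rev, mul_inv_rev,
    mul_inv_cancel_left, hw]

namespace CP

variable {B W : Type} [Group W] {M : CoxeterMatrix B}

theorem inv_eq_self_of_length_eq_imp_eq {cs : CoxeterSystem M W} {w₀ : W}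
    (hw₀uniq : ∀ w : W, cs.length w = cs.length w₀ → w = w₀) : w₀⁻¹ = w₀ :=
  hw₀uniq _ (cs.length_inv w₀)

theorem isRW_cons_iff_isRW_concat {cs : CoxeterSystem M W} {w : W} (hw : w⁻¹ = w) {s t : B}
    (ht : cs.simple t = w * cs.simple s * w) (X : List B) :
    IsRW cs w (s :: X) ↔ IsRW cs w (X ++ [t]) := by
  simp only [IsRW, cs.wordProd_cons, cs.wordProd_append, cs.wordProd_nil, mul_one,
    List.length_cons, List.length_append, List.length_nil, zero_add]
  rw [ht, mul_eq_iff_mul_conj_eq_of_inv_eq_self hw]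

theorem complWord_cons [Nonempty B] (q : B) (l : List B) {I J : Finset ℕ}
    (hJ : ∀ k < l.length, k ∈ J ↔ k + 1 ∈ I) :
    complWord (q :: l) I = (if 0 ∈ I then [] else [q]) ++ complWord l J := by
  unfold complWord
  rw [List.length_cons, List.range_succ_eq_map, List.filter_cons, List.filter_map]
  have hfilter : (List.range l.length).filter ((fun k => decide (k ∉ I)) ∘ Nat.succ) =
      (List.range l.length).filter (fun k => decide (k ∉ J)) :=
    List.filter_congr fun k hk => by simp [hJ k (List.mem_range.mp hk)]
  rw [hfilter]
  by_cases h0 : 0 ∈ I <;> simp [h0, List.map_map, Function.comp_def, List.getD]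

theorem complWord_concat [Nonempty B] (l : List B) (b : B) (J : Finset ℕ) :
    complWord (l ++ [b]) J = complWord l J ++ (if l.length ∈ J then [] else [b]) := by
  unfold complWord
  rw [List.length_append, List.length_singleton, List.range_succ, List.filter_append,
    List.map_append]
  congr 1
  · refine List.map_congr_left fun k hk => ?_
    have hk : k < l.length := List.mem_range.mp (List.mem_filter.mp hk).1
    simp [List.getD_eq_getElem?_getD, List.getElem?_append_left hk]
  · split_ifs <;> simp [*]

theorem mem_image_shift_iff {n k : ℕ} (I : Finset ℕ) (hk : k < n) :
    k ∈ I.image (shift (n + 1)) ↔ k + 1 ∈ I := by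
  refine ⟨fun hkI => ?_, fun h => Finset.mem_image.mpr ⟨k + 1, h, rfl⟩⟩
  obtain ⟨i, hi, rfl⟩ := Finset.mem_image.mp hkI
  unfold shift at hk ⊢
  split_ifs at hk ⊢ with h0
  · omega
  · rwa [Nat.sub_add_cancel (Nat.pos_of_ne_zero h0)]

theorem mem_image_shift_self_iff {n : ℕ} {I : Finset ℕ} (hI : I ⊆ Finset.range (n + 1)) :
    n ∈ I.image (shift (n + 1)) ↔ 0 ∈ I := by
  refine ⟨fun hnI => ?_, fun h => Finset.mem_image.mpr ⟨0, h, rfl⟩⟩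
  obtain ⟨i, hi, hin⟩ := Finset.mem_image.mp hnI
  have := Finset.mem_range.mp (hI hi)
  unfold shift at hin
  split_ifs at hin with h0
  · exact h0 ▸ hi
  · omega

theorem statement_7_general
    {B : Type} [Nonempty B]
    {M : CoxeterMatrix B} {W : Type} [Group W]
    (cs : CoxeterSystem M W)
    (w₀ : W)
    (hw₀uniq : ∀ w : W, cs.length w = cs.length w₀ → w = w₀)
    (q : B) (l : List B) (b : B) (hb : cs.simple b = w₀ * cs.simple q * w₀)
    (I : Finset ℕ) (hIm : I ⊆ Finset.range (q :: l).length) :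
    IsRW cs w₀ (complWord (q :: l) I) ↔
      IsRW cs w₀ (complWord (l ++ [b]) (I.image (shift (q :: l).length))) := by
  rw [complWord_cons q l fun k hk => mem_image_shift_iff I hk, complWord_concat]
  simp only [List.length_cons, mem_image_shift_self_iff hIm]
  split_ifs
  · simp
  · exact isRW_cons_iff_isRW_concat (inv_eq_self_of_length_eq_imp_eq hw₀uniq) hb _

theorem statement_7
    {B : Type} [DecidableEq B] [Fintype B] [Nonempty B]
    {M : CoxeterMatrix B} {W : Type} [Group W] [Finite W]
    (cs : CoxeterSystem M W)
    (w₀ : W)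
    (hw₀max : ∀ w : W, cs.length w ≤ cs.length w₀)
    (hw₀uniq : ∀ w : W, cs.length w = cs.length w₀ → w = w₀)
    (q : B) (l : List B) (b : B) (hb : cs.simple b = w₀ * cs.simple q * w₀)
    (I : Finset ℕ) (hIm : I ⊆ Finset.range (q :: l).length) :
    IsRW cs w₀ (complWord (q :: l) I) ↔
      IsRW cs w₀ (complWord (l ++ [b]) (I.image (shift (q :: l).length))) :=
  statement_7_general cs w₀ hw₀uniq q l b hb I hIm

end CP
end
end

section
/- Let I and J be two adjacent c-clusters of Q_c with I∖{i} = J∖{j}. Then for every k ∈ [m] there exists a scalar a_k ∈ ℝ such that r(J,k) = r(I,k) + a_k·r(I,i). -/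
open scoped Classical

noncomputable section

namespace CP

variable {B : Type} [DecidableEq B] [Fintype B] [Nonempty B]
variable {W : Type} [Group W]

variable {M : CoxeterMatrix B}

set_option linter.unusedSectionVars false

section AuxLemmas

lemma bil_symm (u v : B → ℝ) : bil M u v = bil M v u := by
  rw [bil, bil, Finset.sum_comm]
  refine Finset.sum_congr rfl fun i _ => Finset.sum_congr rfl fun j _ => ?_
  rw [M.symmetric j i]; ring

lemma bil_sub_right (u v w : B → ℝ) : bil M u (v - w) = bil M u v - bil M u w := by
  rw [bil, bil, bil, ← Finset.sum_sub_distrib]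
  refine Finset.sum_congr rfl fun i _ => ?_
  rw [← Finset.sum_sub_distrib]
  refine Finset.sum_congr rfl fun j _ => ?_
  simp only [Pi.sub_apply]; ring

lemma bil_smul_right (c : ℝ) (u v : B → ℝ) : bil M u (c • v) = c * bil M u v := by
  rw [bil, bil, Finset.mul_sum]
  refine Finset.sum_congr rfl fun i _ => ?_
  rw [Finset.mul_sum]
  refine Finset.sum_congr rfl fun j _ => ?_
  simp only [Pi.smul_apply, smul_eq_mul]; ring

lemma bil_sub_left (u v w : B → ℝ) : bil M (u - v) w = bil M u w - bil M v w := by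
  rw [bil_symm, bil_sub_right, bil_symm w u, bil_symm w v]

lemma bil_smul_left (c : ℝ) (u v : B → ℝ) : bil M (c • u) v = c * bil M u v := by
  rw [bil_symm, bil_smul_right, bil_symm]

lemma bil_sroot_self (i : B) : bil M (sroot i) (sroot i) = 1 := by
  rw [bil]
  rw [Finset.sum_eq_single i]
  · rw [Finset.sum_eq_single i]
    · simp [sroot, M.diagonal i]
    · intro b _ hb; simp [sroot, Pi.single_apply, hb]
    · intro h; exact absurd (Finset.mem_univ i) h
  · intro b _ hb; simp [sroot, Pi.single_apply, hb]
  · intro h; exact absurd (Finset.mem_univ i) h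

variable (cs : CoxeterSystem M W) (π : Representation ℝ W (B → ℝ))
  (hgeom : ∀ (i : B) (v : B → ℝ),
      π (cs.simple i) v = v - (2 * bil M (sroot i) v) • sroot i)

include hgeom

lemma bil_simple (s : B) (u v : B → ℝ) :
    bil M (π (cs.simple s) u) (π (cs.simple s) v) = bil M u v := by
  rw [hgeom, hgeom]
  simp only [bil_sub_left, bil_sub_right, bil_smul_left, bil_smul_right, bil_sroot_self]
  rw [bil_symm u (sroot s)]
  ring

lemma bil_word (l : List B) (u v : B → ℝ) :
    bil M (π (cs.wordProd l) u) (π (cs.wordProd l) v) = bil M u v := by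
  induction l generalizing u v with
  | nil => simp [CoxeterSystem.wordProd_nil]
  | cons s l ih =>
    rw [CoxeterSystem.wordProd_cons, map_mul, Module.End.mul_apply, Module.End.mul_apply,
      bil_simple cs π hgeom, ih]

lemma bil_inv (w : W) (u v : B → ℝ) : bil M (π w u) (π w v) = bil M u v := by
  obtain ⟨l, rfl⟩ := cs.wordProd_surjective w
  exact bil_word cs π hgeom l u v

lemma conj_refl (w : W) (s : B) (v : B → ℝ) :
    π (w * cs.simple s * w⁻¹) v
      = v - (2 * bil M (π w (sroot s)) v) • (π w (sroot s)) := by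
  have h1 : (π w) ((π w⁻¹) v) = v := by
    rw [← Module.End.mul_apply, ← map_mul, mul_inv_cancel, map_one, Module.End.one_apply]
  have h2 : bil M (sroot s) ((π w⁻¹) v) = bil M ((π w) (sroot s)) v := by
    conv_rhs => rw [← h1]
    rw [bil_inv cs π hgeom]
  calc π (w * cs.simple s * w⁻¹) v = π w (π (cs.simple s) (π w⁻¹ v)) := by
        simp [map_mul]
    _ = π w ((π w⁻¹ v) - (2 * bil M (sroot s) (π w⁻¹ v)) • sroot s) := by rw [hgeom]
    _ = v - (2 * bil M (π w (sroot s)) v) • (π w (sroot s)) := by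
        rw [map_sub, map_smul, h1, h2]

lemma root_propto (w w' : W) (s t : B)
    (h : w * cs.simple s * w⁻¹ = w' * cs.simple t * w'⁻¹) :
    ∃ a : ℝ, π w (sroot s) = a • π w' (sroot t) := by
  set β := π w (sroot s) with hβ
  set γ := π w' (sroot t) with hγ
  have hb : bil M β β = 1 := by rw [hβ, bil_inv cs π hgeom, bil_sroot_self]
  have e1 : π (w * cs.simple s * w⁻¹) β = -β := by
    rw [conj_refl cs π hgeom, hb]
    funext b; simp; ring
  have e2 : π (w * cs.simple s * w⁻¹) β = β - (2 * bil M γ β) • γ := by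
    rw [h, conj_refl cs π hgeom]
  refine ⟨bil M γ β, funext fun b => ?_⟩
  have h3 := congrFun (e1.symm.trans e2) b
  simp only [Pi.neg_apply, Pi.sub_apply, Pi.smul_apply, smul_eq_mul] at h3 ⊢
  linarith

lemma insert_simple (A Vk : List B) (s t : B) :
    π (cs.wordProd (A ++ s :: Vk)) (sroot t)
      = π (cs.wordProd (A ++ Vk)) (sroot t)
        - (2 * bil M (sroot s) (π (cs.wordProd Vk) (sroot t)))
            • π (cs.wordProd A) (sroot s) := by
  rw [cs.wordProd_append, cs.wordProd_append, cs.wordProd_cons, map_mul, map_mul, map_mul]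
  simp only [Module.End.mul_apply]
  rw [hgeom, map_sub, map_smul]

lemma simple_sroot (t : B) : π (cs.simple t) (sroot t) = -sroot t := by
  rw [hgeom, bil_sroot_self]
  funext b; simp; ring

omit hgeom

lemma range_filter_split (p : ℕ → Bool) (a k : ℕ) (h : a ≤ k) :
    (List.range k).filter p = (List.range a).filter p ++ (List.Ico a k).filter p := by
  rw [← List.Ico.zero_bot, ← List.Ico.zero_bot,
    ← List.Ico.append_consecutive (Nat.zero_le a) h, List.filter_append]

lemma ico_filter_split (p : ℕ → Bool) (a b c : ℕ) (hab : a ≤ b) (hbc : b ≤ c) :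
    (List.Ico a c).filter p = (List.Ico a b).filter p ++ (List.Ico b c).filter p := by
  rw [← List.Ico.append_consecutive hab hbc, List.filter_append]

lemma filter_single_pos (p : ℕ → Bool) (a : ℕ) (h : p a = true) :
    ([a] : List ℕ).filter p = [a] := by
  rw [List.filter_singleton, h]; rfl

lemma filter_single_neg (p : ℕ → Bool) (a : ℕ) (h : p a = false) :
    ([a] : List ℕ).filter p = [] := by
  rw [List.filter_singleton, h]; rfl

end AuxLemmas

theorem statement_10
    {B : Type} [DecidableEq B] [Fintype B] [Nonempty B]
    {M : CoxeterMatrix B} {W : Type} [Group W] [Finite W]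
    (cs : CoxeterSystem M W)
    (hcrys : ∀ i j : B, i ≠ j → M i j ∈ ({2, 3, 4, 6} : Set ℕ))
    (π : Representation ℝ W (B → ℝ))
    (hgeom : ∀ (i : B) (v : B → ℝ),
      π (cs.simple i) v = v - (2 * bil M (sroot i) v) • sroot i)
    (w₀ : W)
    (hw₀max : ∀ w : W, cs.length w ≤ cs.length w₀)
    (hw₀uniq : ∀ w : W, cs.length w = cs.length w₀ → w = w₀)
    (cword : List B) (hcnodup : cword.Nodup) (hcfull : ∀ i : B, i ∈ cword)
    (sw : List B) (hsw : IsRW cs w₀ sw)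
    (pos : Fin sw.length → ℕ) (hposmono : StrictMono pos)
    (hposlet : ∀ k : Fin sw.length, sw.get k = cInf cword (pos k))
    (hposlex : ∀ g : Fin sw.length → ℕ, StrictMono g →
      IsRW cs w₀ (List.ofFn fun k => cInf cword (g k)) → LexLE pos g)
    (I J : Finset ℕ) (hI : IsCluster cs w₀ (cword ++ sw) I) (hJ : IsCluster cs w₀ (cword ++ sw) J)
    (i j : ℕ) (hiI : i ∈ I) (hjJ : j ∈ J) (hij : i ≠ j) (hIJ : I \ {i} = J \ {j}) :
    ∀ k : ℕ, k < (cword ++ sw).length →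
      ∃ a : ℝ, rootFn cs π (cword ++ sw) J k = rootFn cs π (cword ++ sw) I k + a • rootFn cs π (cword ++ sw) I i := by
  intro k hk
  classical
  have hjI : j ∉ I := by
    intro hjI
    have hmm : j ∈ J \ {j} := by
      rw [← hIJ]; exact Finset.mem_sdiff.mpr ⟨hjI, by simpa using hij.symm⟩
    simp at hmm
  have hiJ : i ∉ J := by
    intro hiJ
    have hmm : i ∈ I \ {i} := by
      rw [hIJ]; exact Finset.mem_sdiff.mpr ⟨hiJ, by simpa using hij⟩
    simp at hmm
  have hmem : ∀ x : ℕ, x ≠ i → x ≠ j → ((x ∉ I) ↔ (x ∉ J)) := by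
    intro x hxi hxj
    have h1 := Finset.ext_iff.mp hIJ x
    simp only [Finset.mem_sdiff, Finset.mem_singleton] at h1
    tauto
  set Q : List B := cword ++ sw with hQdef
  have him : i < Q.length := by simpa using hI.1 hiI
  have hjm : j < Q.length := by simpa using hJ.1 hjJ
  have hsim : ∀ t : B, π (cs.simple t) (sroot t) = -sroot t := simple_sroot cs π hgeom
  -- congruence helpers
  have cIco : ∀ a b : ℕ, (i < a ∨ b ≤ i) → (j < a ∨ b ≤ j) →
      (List.Ico a b).filter (· ∉ J) = (List.Ico a b).filter (· ∉ I) := by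
    intro a b h1 h2
    refine List.filter_congr fun x hx => ?_
    rw [List.Ico.mem] at hx
    exact decide_eq_decide.mpr (hmem x (by omega) (by omega)).symm
  have cRange : ∀ b : ℕ, b ≤ i → b ≤ j →
      (List.range b).filter (· ∉ J) = (List.range b).filter (· ∉ I) := by
    intro b h1 h2
    refine List.filter_congr fun x hx => ?_
    rw [List.mem_range] at hx
    exact decide_eq_decide.mpr (hmem x (by omega) (by omega)).symm
  rcases lt_or_gt_of_ne hij with hlt | hlt
  · -- Case i < j
    -- decomposition of the complementary words
    have ecI : complWord Q I =
        (((List.range i).filter (· ∉ I)).map (fun x => Q.getD x (arb B))) ++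
        ((((List.Ico (i+1) j).filter (· ∉ I)).map (fun x => Q.getD x (arb B))) ++
         (Q.getD j (arb B) ::
           (((List.Ico (j+1) Q.length).filter (· ∉ I)).map (fun x => Q.getD x (arb B))))) := by
      rw [complWord, range_filter_split _ (i+1) Q.length (by omega),
        List.range_succ, List.filter_append,
        filter_single_neg _ i (by simp [hiI]),
        ico_filter_split _ (i+1) j Q.length (by omega) (by omega),
        ico_filter_split _ j (j+1) Q.length (by omega) (by omega),
        List.Ico.succ_singleton, filter_single_pos _ j (by simp [hjI])]
      simp
    have ecJ : complWord Q J =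
        (((List.range i).filter (· ∉ I)).map (fun x => Q.getD x (arb B))) ++
        (Q.getD i (arb B) ::
          ((((List.Ico (i+1) j).filter (· ∉ I)).map (fun x => Q.getD x (arb B))) ++
           (((List.Ico (j+1) Q.length).filter (· ∉ J)).map (fun x => Q.getD x (arb B))))) := by
      rw [complWord, range_filter_split _ (i+1) Q.length (by omega),
        List.range_succ, List.filter_append,
        filter_single_pos _ i (by simp [hiJ]),
        ico_filter_split _ (i+1) j Q.length (by omega) (by omega),
        ico_filter_split _ j (j+1) Q.length (by omega) (by omega),
        List.Ico.succ_singleton, filter_single_neg _ j (by simp [hjJ]),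
        cRange i (by omega) (by omega), cIco (i+1) j (by omega) (by omega)]
      simp
    -- the key braid-free relation coming from the two reduced words for w₀
    have hprod : cs.wordProd (complWord Q I) = cs.wordProd (complWord Q J) := by
      rw [hI.2.1, hJ.2.1]
    rw [ecI, ecJ] at hprod
    simp only [CoxeterSystem.wordProd_append, CoxeterSystem.wordProd_cons] at hprod
    have hprod2 := mul_left_cancel hprod
    rw [← mul_assoc, ← mul_assoc] at hprod2
    -- need also to rewrite the filter on the J-side tail to the I-side before cancelling
    rw [cIco (j+1) Q.length (by omega) (by omega)] at hprod2
    have key : cs.simple (Q.getD i (arb B)) *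
        cs.wordProd (((List.Ico (i+1) j).filter (· ∉ I)).map (fun x => Q.getD x (arb B))) =
        cs.wordProd (((List.Ico (i+1) j).filter (· ∉ I)).map (fun x => Q.getD x (arb B))) *
        cs.simple (Q.getD j (arb B)) := (mul_right_cancel hprod2).symm
    rcases le_or_gt k i with hki | hik
    · -- k ≤ i : the two root functions agree
      refine ⟨0, ?_⟩
      simp only [rootFn, zero_smul, add_zero]
      rw [cRange k (by omega) (by omega)]
    rcases le_or_gt k j with hkj | hjk
    · -- i < k ≤ j
      have eIk : (List.range k).filter (· ∉ I) =
          ((List.range i).filter (· ∉ I)) ++ ((List.Ico (i+1) k).filter (· ∉ I)) := by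
        rw [range_filter_split _ (i+1) k (by omega), List.range_succ, List.filter_append,
          filter_single_neg _ i (by simp [hiI]), List.append_nil]
      have eJk : ((List.range k).filter (· ∉ J)).map (fun x => Q.getD x (arb B)) =
          (((List.range i).filter (· ∉ I)).map (fun x => Q.getD x (arb B))) ++
          Q.getD i (arb B) ::
            (((List.Ico (i+1) k).filter (· ∉ I)).map (fun x => Q.getD x (arb B))) := by
        rw [range_filter_split _ (i+1) k (by omega), List.range_succ, List.filter_append,
          filter_single_pos _ i (by simp [hiJ]),
          cRange i (by omega) (by omega), cIco (i+1) k (by omega) (by omega)]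
        simp
      refine ⟨-(2 * bil M (sroot (Q.getD i (arb B)))
        (π (cs.wordProd (((List.Ico (i+1) k).filter (· ∉ I)).map (fun x => Q.getD x (arb B))))
          (sroot (Q.getD k (arb B))))), ?_⟩
      simp only [rootFn]
      rw [eJk, eIk, List.map_append, insert_simple cs π hgeom, neg_smul, ← sub_eq_add_neg]
    · -- j < k
      have eIk : ((List.range k).filter (· ∉ I)).map (fun x => Q.getD x (arb B)) =
          (((List.range i).filter (· ∉ I)).map (fun x => Q.getD x (arb B))) ++
          ((((List.Ico (i+1) j).filter (· ∉ I)).map (fun x => Q.getD x (arb B))) ++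
           (Q.getD j (arb B) ::
             (((List.Ico (j+1) k).filter (· ∉ I)).map (fun x => Q.getD x (arb B))))) := by
        rw [range_filter_split _ (i+1) k (by omega), List.range_succ, List.filter_append,
          filter_single_neg _ i (by simp [hiI]),
          ico_filter_split _ (i+1) j k (by omega) (by omega),
          ico_filter_split _ j (j+1) k (by omega) (by omega),
          List.Ico.succ_singleton, filter_single_pos _ j (by simp [hjI])]
        simp
      have eJk : ((List.range k).filter (· ∉ J)).map (fun x => Q.getD x (arb B)) =
          (((List.range i).filter (· ∉ I)).map (fun x => Q.getD x (arb B))) ++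
          (Q.getD i (arb B) ::
            ((((List.Ico (i+1) j).filter (· ∉ I)).map (fun x => Q.getD x (arb B))) ++
             (((List.Ico (j+1) k).filter (· ∉ I)).map (fun x => Q.getD x (arb B))))) := by
        rw [range_filter_split _ (i+1) k (by omega), List.range_succ, List.filter_append,
          filter_single_pos _ i (by simp [hiJ]),
          ico_filter_split _ (i+1) j k (by omega) (by omega),
          ico_filter_split _ j (j+1) k (by omega) (by omega),
          List.Ico.succ_singleton, filter_single_neg _ j (by simp [hjJ]),
          cRange i (by omega) (by omega), cIco (i+1) j (by omega) (by omega),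
          cIco (j+1) k (by omega) (by omega)]
        simp
      refine ⟨0, ?_⟩
      simp only [rootFn, zero_smul, add_zero]
      rw [eIk, eJk]
      have hwp : cs.wordProd
          ((((List.range i).filter (· ∉ I)).map (fun x => Q.getD x (arb B))) ++
          (Q.getD i (arb B) ::
            ((((List.Ico (i+1) j).filter (· ∉ I)).map (fun x => Q.getD x (arb B))) ++
             (((List.Ico (j+1) k).filter (· ∉ I)).map (fun x => Q.getD x (arb B)))))) =
          cs.wordProd
          ((((List.range i).filter (· ∉ I)).map (fun x => Q.getD x (arb B))) ++
          ((((List.Ico (i+1) j).filter (· ∉ I)).map (fun x => Q.getD x (arb B))) ++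
           (Q.getD j (arb B) ::
             (((List.Ico (j+1) k).filter (· ∉ I)).map (fun x => Q.getD x (arb B)))))) := by
        simp only [CoxeterSystem.wordProd_append, CoxeterSystem.wordProd_cons]
        congr 1
        rw [← mul_assoc, key, mul_assoc]
      rw [hwp]
  · -- Case j < i
    have ecI : complWord Q I =
        (((List.range j).filter (· ∉ I)).map (fun x => Q.getD x (arb B))) ++
        (Q.getD j (arb B) ::
          ((((List.Ico (j+1) i).filter (· ∉ I)).map (fun x => Q.getD x (arb B))) ++
           (((List.Ico (i+1) Q.length).filter (· ∉ I)).map (fun x => Q.getD x (arb B))))) := by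
      rw [complWord, range_filter_split _ (j+1) Q.length (by omega),
        List.range_succ, List.filter_append,
        filter_single_pos _ j (by simp [hjI]),
        ico_filter_split _ (j+1) i Q.length (by omega) (by omega),
        ico_filter_split _ i (i+1) Q.length (by omega) (by omega),
        List.Ico.succ_singleton, filter_single_neg _ i (by simp [hiI])]
      simp
    have ecJ : complWord Q J =
        (((List.range j).filter (· ∉ I)).map (fun x => Q.getD x (arb B))) ++
        ((((List.Ico (j+1) i).filter (· ∉ I)).map (fun x => Q.getD x (arb B))) ++
         (Q.getD i (arb B) ::
           (((List.Ico (i+1) Q.length).filter (· ∉ J)).map (fun x => Q.getD x (arb B))))) := by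
      rw [complWord, range_filter_split _ (j+1) Q.length (by omega),
        List.range_succ, List.filter_append,
        filter_single_neg _ j (by simp [hjJ]),
        ico_filter_split _ (j+1) i Q.length (by omega) (by omega),
        ico_filter_split _ i (i+1) Q.length (by omega) (by omega),
        List.Ico.succ_singleton, filter_single_pos _ i (by simp [hiJ]),
        cRange j (by omega) (by omega), cIco (j+1) i (by omega) (by omega)]
      simp
    have hprod : cs.wordProd (complWord Q I) = cs.wordProd (complWord Q J) := by
      rw [hI.2.1, hJ.2.1]
    rw [ecI, ecJ] at hprod
    simp only [CoxeterSystem.wordProd_append, CoxeterSystem.wordProd_cons] at hprod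
    have hprod2 := mul_left_cancel hprod
    rw [← mul_assoc, ← mul_assoc] at hprod2
    rw [cIco (i+1) Q.length (by omega) (by omega)] at hprod2
    have key : cs.simple (Q.getD j (arb B)) *
        cs.wordProd (((List.Ico (j+1) i).filter (· ∉ I)).map (fun x => Q.getD x (arb B))) =
        cs.wordProd (((List.Ico (j+1) i).filter (· ∉ I)).map (fun x => Q.getD x (arb B))) *
        cs.simple (Q.getD i (arb B)) := mul_right_cancel hprod2
    rcases le_or_gt k j with hkj | hjk
    · refine ⟨0, ?_⟩
      simp only [rootFn, zero_smul, add_zero]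
      rw [cRange k (by omega) (by omega)]
    rcases le_or_gt k i with hki | hik
    · -- j < k ≤ i : the hard case
      have eIk : ((List.range k).filter (· ∉ I)).map (fun x => Q.getD x (arb B)) =
          (((List.range j).filter (· ∉ I)).map (fun x => Q.getD x (arb B))) ++
          Q.getD j (arb B) ::
            (((List.Ico (j+1) k).filter (· ∉ I)).map (fun x => Q.getD x (arb B))) := by
        rw [range_filter_split _ (j+1) k (by omega), List.range_succ, List.filter_append,
          filter_single_pos _ j (by simp [hjI])]
        simp
      have eJk : ((List.range k).filter (· ∉ J)).map (fun x => Q.getD x (arb B)) =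
          (((List.range j).filter (· ∉ I)).map (fun x => Q.getD x (arb B))) ++
          (((List.Ico (j+1) k).filter (· ∉ I)).map (fun x => Q.getD x (arb B))) := by
        rw [range_filter_split _ (j+1) k (by omega), List.range_succ, List.filter_append,
          filter_single_neg _ j (by simp [hjJ]), List.append_nil,
          cRange j (by omega) (by omega), cIco (j+1) k (by omega) (by omega)]
        simp
      have eIi : (List.range i).filter (· ∉ I) =
          ((List.range j).filter (· ∉ I)) ++ (j :: ((List.Ico (j+1) i).filter (· ∉ I))) := by
        rw [range_filter_split _ (j+1) i (by omega), List.range_succ, List.filter_append,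
          filter_single_pos _ j (by simp [hjI])]
        simp
      -- abbreviations
      set wA := cs.wordProd (((List.range j).filter (· ∉ I)).map (fun x => Q.getD x (arb B)))
        with hwA
      set wV := cs.wordProd (((List.Ico (j+1) i).filter (· ∉ I)).map (fun x => Q.getD x (arb B)))
        with hwV
      have hconj : wA * cs.simple (Q.getD j (arb B)) * wA⁻¹ =
          (wA * wV) * cs.simple (Q.getD i (arb B)) * (wA * wV)⁻¹ := by
        have h6 : cs.simple (Q.getD j (arb B)) = wV * cs.simple (Q.getD i (arb B)) * wV⁻¹ := by
          rw [← key]; group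
        rw [h6]; group
      obtain ⟨a', ha'⟩ := root_propto cs π hgeom wA (wA * wV)
        (Q.getD j (arb B)) (Q.getD i (arb B)) hconj
      -- r(I,i) = - π (wA * wV) (sroot (g i))
      have eri : rootFn cs π Q I i = - (π (wA * wV) (sroot (Q.getD i (arb B)))) := by
        simp only [rootFn]
        rw [eIi, List.map_append, List.map_cons, cs.wordProd_append, cs.wordProd_cons]
        rw [← hwA, ← hwV, key, ← mul_assoc, map_mul, Module.End.mul_apply, hsim, map_neg]
      refine ⟨-((2 * bil M (sroot (Q.getD j (arb B)))
        (π (cs.wordProd (((List.Ico (j+1) k).filter (· ∉ I)).map (fun x => Q.getD x (arb B))))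
          (sroot (Q.getD k (arb B))))) * a'), ?_⟩
      rw [eri]
      simp only [rootFn]
      rw [eJk, eIk, insert_simple cs π hgeom, ← hwA, ha']
      funext b
      simp only [Pi.add_apply, Pi.sub_apply, Pi.smul_apply, Pi.neg_apply, smul_eq_mul]
      ring
    · -- i < k
      have eIk : ((List.range k).filter (· ∉ I)).map (fun x => Q.getD x (arb B)) =
          (((List.range j).filter (· ∉ I)).map (fun x => Q.getD x (arb B))) ++
          (Q.getD j (arb B) ::
            ((((List.Ico (j+1) i).filter (· ∉ I)).map (fun x => Q.getD x (arb B))) ++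
             (((List.Ico (i+1) k).filter (· ∉ I)).map (fun x => Q.getD x (arb B))))) := by
        rw [range_filter_split _ (j+1) k (by omega), List.range_succ, List.filter_append,
          filter_single_pos _ j (by simp [hjI]),
          ico_filter_split _ (j+1) i k (by omega) (by omega),
          ico_filter_split _ i (i+1) k (by omega) (by omega),
          List.Ico.succ_singleton, filter_single_neg _ i (by simp [hiI])]
        simp
      have eJk : ((List.range k).filter (· ∉ J)).map (fun x => Q.getD x (arb B)) =
          (((List.range j).filter (· ∉ I)).map (fun x => Q.getD x (arb B))) ++
          ((((List.Ico (j+1) i).filter (· ∉ I)).map (fun x => Q.getD x (arb B))) ++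
           (Q.getD i (arb B) ::
             (((List.Ico (i+1) k).filter (· ∉ I)).map (fun x => Q.getD x (arb B))))) := by
        rw [range_filter_split _ (j+1) k (by omega), List.range_succ, List.filter_append,
          filter_single_neg _ j (by simp [hjJ]),
          ico_filter_split _ (j+1) i k (by omega) (by omega),
          ico_filter_split _ i (i+1) k (by omega) (by omega),
          List.Ico.succ_singleton, filter_single_pos _ i (by simp [hiJ]),
          cRange j (by omega) (by omega), cIco (j+1) i (by omega) (by omega),
          cIco (i+1) k (by omega) (by omega)]
        simp
      refine ⟨0, ?_⟩
      simp only [rootFn, zero_smul, add_zero]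
      rw [eIk, eJk]
      have hwp : cs.wordProd
          ((((List.range j).filter (· ∉ I)).map (fun x => Q.getD x (arb B))) ++
          ((((List.Ico (j+1) i).filter (· ∉ I)).map (fun x => Q.getD x (arb B))) ++
           (Q.getD i (arb B) ::
             (((List.Ico (i+1) k).filter (· ∉ I)).map (fun x => Q.getD x (arb B)))))) =
          cs.wordProd
          ((((List.range j).filter (· ∉ I)).map (fun x => Q.getD x (arb B))) ++
          (Q.getD j (arb B) ::
            ((((List.Ico (j+1) i).filter (· ∉ I)).map (fun x => Q.getD x (arb B))) ++
             (((List.Ico (i+1) k).filter (· ∉ I)).map (fun x => Q.getD x (arb B)))))) := by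
        simp only [CoxeterSystem.wordProd_append, CoxeterSystem.wordProd_cons]
        congr 1
        rw [← mul_assoc, ← key, mul_assoc]
      rw [hwp]


end CP
end
end

section
/- Let I and J be two adjacent c-clusters of Q_c with I∖{i} = J∖{j} and i < j. Let w be the product, in increasing order of positions, of the letters q_x for x ∈ [i−1]∖I, and set t_i := w q_i w⁻¹, the reflection of W orthogonal to the root r(I,i) = w(α_{q_i}). Then for every k ∈ [m]: r(J,k) = t_i(r(I,k)) if i < k ≤ j, and r(J,k) = r(I,k) otherwise. -/
open scoped Classical

noncomputable section

namespace CP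

variable {B : Type} [DecidableEq B] [Fintype B] [Nonempty B]
variable {W : Type} [Group W]

variable {M : CoxeterMatrix B}

private lemma filter_range_split (p : ℕ → Bool) {i k : ℕ} (h : i ≤ k) :
    (List.range k).filter p =
      (List.range i).filter p ++ (List.range k).filter (fun x => p x && decide (i ≤ x)) := by
  obtain ⟨d, rfl⟩ := Nat.exists_eq_add_of_le h
  rw [List.range_add, List.filter_append, List.filter_append]
  have h1 : (List.range i).filter (fun x => p x && decide (i ≤ x)) = [] := by
    refine List.filter_eq_nil_iff.mpr fun a ha => ?_
    have : a < i := List.mem_range.mp ha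
    simp [Nat.not_le.mpr this]
  have h2 : (List.map (fun x => i + x) (List.range d)).filter (fun x => p x && decide (i ≤ x))
      = (List.map (fun x => i + x) (List.range d)).filter p := by
    refine List.filter_congr fun x hx => ?_
    obtain ⟨a, -, rfl⟩ := List.mem_map.mp hx
    simp
  rw [h1, h2, List.nil_append]

private lemma filter_range_cons (p : ℕ → Bool) {i k : ℕ} (h : i < k) (hp : p i = true) :
    (List.range k).filter (fun x => p x && decide (i ≤ x)) =
      i :: (List.range k).filter (fun x => p x && decide (i < x)) := by
  rw [filter_range_split (fun x => p x && decide (i ≤ x)) (Nat.succ_le_of_lt h)]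
  have h1 : (List.range (i+1)).filter (fun x => p x && decide (i ≤ x)) = [i] := by
    rw [List.range_succ, List.filter_append]
    have h0 : (List.range i).filter (fun x => p x && decide (i ≤ x)) = [] := by
      refine List.filter_eq_nil_iff.mpr fun a ha => ?_
      have : a < i := List.mem_range.mp ha
      simp [Nat.not_le.mpr this]
    simp [h0, hp]
  have h2 : (List.range k).filter (fun x => (p x && decide (i ≤ x)) && decide (i+1 ≤ x))
      = (List.range k).filter (fun x => p x && decide (i < x)) := by
    refine List.filter_congr fun x _ => ?_
    cases hpx : p x
    · simp [hpx]
    · simp only [hpx, Bool.true_and, ← Bool.decide_and, decide_eq_decide]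
      omega
  rw [h1, h2, List.singleton_append]

theorem statement_17
    {B : Type} [DecidableEq B] [Fintype B] [Nonempty B]
    {M : CoxeterMatrix B} {W : Type} [Group W] [Finite W]
    (cs : CoxeterSystem M W)
    (hcrys : ∀ i j : B, i ≠ j → M i j ∈ ({2, 3, 4, 6} : Set ℕ))
    (π : Representation ℝ W (B → ℝ))
    (hgeom : ∀ (i : B) (v : B → ℝ),
      π (cs.simple i) v = v - (2 * bil M (sroot i) v) • sroot i)
    (w₀ : W)
    (hw₀max : ∀ w : W, cs.length w ≤ cs.length w₀)
    (hw₀uniq : ∀ w : W, cs.length w = cs.length w₀ → w = w₀)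
    (cword : List B) (hcnodup : cword.Nodup) (hcfull : ∀ i : B, i ∈ cword)
    (sw : List B) (hsw : IsRW cs w₀ sw)
    (pos : Fin sw.length → ℕ) (hposmono : StrictMono pos)
    (hposlet : ∀ k : Fin sw.length, sw.get k = cInf cword (pos k))
    (hposlex : ∀ g : Fin sw.length → ℕ, StrictMono g →
      IsRW cs w₀ (List.ofFn fun k => cInf cword (g k)) → LexLE pos g)
    (I J : Finset ℕ) (hI : IsCluster cs w₀ (cword ++ sw) I) (hJ : IsCluster cs w₀ (cword ++ sw) J)
    (i j : ℕ) (hiI : i ∈ I) (hjJ : j ∈ J) (hij : i ≠ j) (hIJ : I \ {i} = J \ {j})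
    (hlt : i < j) :
    ∀ k : ℕ, k < (cword ++ sw).length →
      rootFn cs π (cword ++ sw) J k =
        if i < k ∧ k ≤ j then
          π (cs.wordProd (((List.range i).filter (· ∉ I)).map
                (fun x => (cword ++ sw).getD x (arb B))) *
              cs.simple ((cword ++ sw).getD i (arb B)) *
              (cs.wordProd (((List.range i).filter (· ∉ I)).map
                (fun x => (cword ++ sw).getD x (arb B))))⁻¹)
            (rootFn cs π (cword ++ sw) I k)
        else rootFn cs π (cword ++ sw) I k := by
  intro k hk
  set Q := cword ++ sw with hQ
  have hiJ2 : i ∉ J := by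
    intro h
    have h1 : i ∈ J \ {j} := Finset.mem_sdiff.mpr ⟨h, by simp [hij]⟩
    rw [← hIJ] at h1
    simp at h1
  set K : Finset ℕ := I \ {i} with hKdef
  have hKJ : K = J \ {j} := hIJ
  have hiK : i ∉ K := by simp [hKdef]
  have hjK : j ∉ K := by rw [hKJ]; simp
  have hmemI : ∀ x : ℕ, x ∉ I ↔ x ∉ K ∧ x ≠ i := by
    intro x
    constructor
    · intro h
      exact ⟨fun hx => h (Finset.mem_sdiff.mp hx).1, fun hxi => h (hxi ▸ hiI)⟩
    · rintro ⟨h1, h2⟩ hxI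
      exact h1 (by simp [hKdef, Finset.mem_sdiff, hxI, h2])
  have hmemJ : ∀ x : ℕ, x ∉ J ↔ x ∉ K ∧ x ≠ j := by
    intro x
    rw [hKJ]
    constructor
    · intro h
      exact ⟨fun hx => h (Finset.mem_sdiff.mp hx).1, fun hxj => h (hxj ▸ hjJ)⟩
    · rintro ⟨h1, h2⟩ hxJ
      exact h1 (by simp [Finset.mem_sdiff, hxJ, h2])
  -- list splitting facts
  have hL1 : ∀ {k' : ℕ}, k' ≤ i →
      (List.range k').filter (· ∉ I) = (List.range k').filter (· ∉ K) := by
    intro k' hk'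
    refine List.filter_congr fun x hx => ?_
    have hxk : x < k' := List.mem_range.mp hx
    refine decide_eq_decide.mpr ?_
    rw [hmemI x]
    exact ⟨fun h => h.1, fun h => ⟨h, by omega⟩⟩
  have hL1J : ∀ {k' : ℕ}, k' ≤ j →
      (List.range k').filter (· ∉ J) = (List.range k').filter (· ∉ K) := by
    intro k' hk'
    refine List.filter_congr fun x hx => ?_
    have hxk : x < k' := List.mem_range.mp hx
    refine decide_eq_decide.mpr ?_
    rw [hmemJ x]
    exact ⟨fun h => h.1, fun h => ⟨h, by omega⟩⟩
  have hL2 : ∀ {k' : ℕ}, i ≤ k' →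
      (List.range k').filter (· ∉ I) =
        (List.range i).filter (· ∉ K) ++
          (List.range k').filter (fun x => decide (x ∉ K) && decide (i < x)) := by
    intro k' hk'
    rw [filter_range_split _ hk', hL1 (le_refl i)]
    congr 1
    refine List.filter_congr fun x hx => ?_
    rw [← Bool.decide_and, ← Bool.decide_and, decide_eq_decide, hmemI x]
    constructor
    · rintro ⟨⟨h1, h2⟩, h3⟩
      exact ⟨h1, by omega⟩
    · rintro ⟨h1, h2⟩
      exact ⟨⟨h1, by omega⟩, by omega⟩
  have hL3 : ∀ {k' : ℕ}, i < k' →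
      (List.range k').filter (· ∉ K) =
        (List.range i).filter (· ∉ K) ++
          i :: (List.range k').filter (fun x => decide (x ∉ K) && decide (i < x)) := by
    intro k' hk'
    rw [filter_range_split _ (le_of_lt hk'), filter_range_cons _ hk' (by simpa using hiK)]
  have hL4 : ∀ {k' : ℕ}, j < k' →
      (List.range k').filter (fun x => decide (x ∉ K) && decide (i < x)) =
        (List.range j).filter (fun x => decide (x ∉ K) && decide (i < x)) ++
          j :: (List.range k').filter (fun x => decide (x ∉ K) && decide (j < x)) := by
    intro k' hk'
    rw [filter_range_split _ (le_of_lt hk'),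
      filter_range_cons _ hk' (by simp [hjK, hlt])]
    congr 2
    refine List.filter_congr fun x hx => ?_
    cases h0 : decide (x ∉ K)
    · simp [h0]
    · simp only [h0, Bool.true_and, ← Bool.decide_and, decide_eq_decide]
      omega
  have hL5 : ∀ {k' : ℕ}, j < k' →
      (List.range k').filter (· ∉ J) =
        (List.range j).filter (· ∉ K) ++
          (List.range k').filter (fun x => decide (x ∉ K) && decide (j < x)) := by
    intro k' hk'
    rw [filter_range_split _ (le_of_lt hk'), hL1J (le_refl j)]
    congr 1
    refine List.filter_congr fun x hx => ?_
    rw [← Bool.decide_and, ← Bool.decide_and, decide_eq_decide, hmemJ x]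
    constructor
    · rintro ⟨⟨h1, h2⟩, h3⟩
      exact ⟨h1, by omega⟩
    · rintro ⟨h1, h2⟩
      exact ⟨⟨h1, by omega⟩, by omega⟩
  -- fold the conjugating element
  rw [hL1 (le_refl i)]
  have hi_lt : i < Q.length := Finset.mem_range.mp (hI.1 hiI)
  have hj_lt : j < Q.length := Finset.mem_range.mp (hJ.1 hjJ)
  set wA := cs.wordProd (((List.range i).filter (· ∉ K)).map
    (fun x => Q.getD x (arb B))) with hwA
  set wB := cs.wordProd (((List.range j).filter
      (fun x => decide (x ∉ K) && decide (i < x))).map (fun x => Q.getD x (arb B))) with hwB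
  set wC := cs.wordProd (((List.range Q.length).filter
      (fun x => decide (x ∉ K) && decide (j < x))).map (fun x => Q.getD x (arb B))) with hwC
  set si := cs.simple (Q.getD i (arb B)) with hsi
  set sj := cs.simple (Q.getD j (arb B)) with hsj
  -- the key identity
  have e1 : cs.wordProd (complWord Q I) = w₀ := hI.2.1
  have e2 : cs.wordProd (complWord Q J) = w₀ := hJ.2.1
  rw [complWord, hL2 (le_of_lt hi_lt), hL4 hj_lt] at e1
  rw [complWord, hL5 hj_lt, hL3 hlt] at e2
  simp only [List.map_append, List.map_cons, CoxeterSystem.wordProd_append,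
    CoxeterSystem.wordProd_cons, ← hwA, ← hwB, ← hwC, ← hsi, ← hsj] at e1 e2
  have key : wB * sj = si * wB := by
    have e3 : wA * (wB * (sj * wC)) = wA * (si * (wB * wC)) := by
      have h := e1.trans e2.symm
      rw [h]
      group
    have e4 := mul_left_cancel e3
    have e5 : (wB * sj) * wC = (si * wB) * wC := by
      rw [mul_assoc, mul_assoc]
      exact e4
    exact mul_right_cancel e5
  rcases Nat.lt_or_ge i k with hik | hik
  · rcases Nat.lt_or_ge j k with hjk | hjk
    · -- case j < k
      rw [if_neg (by omega)]
      simp only [rootFn]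
      rw [hL5 hjk, hL3 hlt, hL2 (le_of_lt hik), hL4 hjk]
      simp only [List.map_append, List.map_cons, CoxeterSystem.wordProd_append,
        CoxeterSystem.wordProd_cons, ← hwA, ← hwB, ← hsi, ← hsj]
      have hw : wA * (si * wB) *
          cs.wordProd (((List.range k).filter
            (fun x => decide (x ∉ K) && decide (j < x))).map (fun x => Q.getD x (arb B))) =
          wA * (wB * (sj * cs.wordProd (((List.range k).filter
            (fun x => decide (x ∉ K) && decide (j < x))).map (fun x => Q.getD x (arb B))))) := by
        rw [← key]
        group
      rw [hw]
    · -- case i < k ≤ j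
      rw [if_pos ⟨hik, hjk⟩]
      simp only [rootFn]
      rw [hL1J hjk, hL3 hik, hL2 (le_of_lt hik)]
      simp only [List.map_append, List.map_cons, CoxeterSystem.wordProd_append,
        CoxeterSystem.wordProd_cons, ← hwA, ← hsi]
      rw [← Module.End.mul_apply, ← map_mul]
      congr 2
      group
  · -- case k ≤ i
    rw [if_neg (by omega)]
    simp only [rootFn]
    rw [hL1J (by omega), hL1 (by omega)]

end CP
end
end
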